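/- (Lemma 3.2, L-BFGS case) Let 0 < m̂ ≤ M̂, let δ ∈ [m̂, M̂], let B₀ = δ I (d × d), and for i = 0, …, t−1 let (sᵢ, yᵢ) ∈ ℝ^d × ℝ^d satisfy sᵢ ≠ 0, ⟨sᵢ, yᵢ⟩ > 0, ⟨sᵢ, yᵢ⟩/⟨sᵢ, sᵢ⟩ ≥ m̂ and ⟨yᵢ, yᵢ⟩/⟨sᵢ, yᵢ⟩ ≤ M̂, with B_{i+1} = Bᵢ − (Bᵢ sᵢ)(Bᵢ sᵢ)ᵀ/⟨sᵢ, Bᵢ sᵢ⟩ + yᵢ yᵢᵀ/⟨sᵢ, yᵢ⟩. Let H = B_t⁻¹. Then for every g ∈ ℝ^d with g ≠ 0, the angle θ between H g and g satisfies cos θ = ⟨g, H g⟩/(‖g‖ · ‖H g‖) ≥ exp[−(d + t)(M̂ − log m̂)]. -/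

import Mathlib

/-!
The potential `ψ(B) = tr B - log det B = ∑ (λ - log λ)` of Byrd and Nocedal controls the
spectrum of a positive definite `B`: `λ_max / λ_min ≤ exp ψ(B)`, and the cosine of the angle
between `g` and `B⁻¹ g` is at least `λ_min / λ_max`. Since `ψ(δ I) ≤ d (M̂ - log m̂)`, it
suffices that each BFGS update keeps `B` positive definite and raises `ψ` by at most
`M̂ - log m̂`: the trace and the determinant change by explicit rank-two formulas, and
Cauchy–Schwarz together with `log x ≤ x - 1` absorbs the term the update removes from the trace.
-/

open Matrix

lemma Real.two_mul_log_le_self {x : ℝ} (hx : 0 < x) : 2 * Real.log x ≤ x := by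
  have h := Real.log_le_sub_one_of_pos (half_pos hx)
  rw [Real.log_div hx.ne' two_ne_zero] at h
  linarith [Real.log_two_lt_d9]

namespace Matrix

variable {n : Type*} [Fintype n]

lemma IsHermitian.dotProduct_mulVec_comm {B : Matrix n n ℝ} (hB : B.IsHermitian) (u v : n → ℝ) :
    u ⬝ᵥ B *ᵥ v = v ⬝ᵥ B *ᵥ u := by
  rw [← dotProduct_transpose_mulVec, ← conjTranspose_eq_transpose_of_trivial, hB.eq]

lemma IsHermitian.dotProduct_mulVec_sub_smul_self {B : Matrix n n ℝ} (hB : B.IsHermitian)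
    {s : n → ℝ} (hs : s ⬝ᵥ B *ᵥ s ≠ 0) (x : n → ℝ) :
    (x - ((x ⬝ᵥ B *ᵥ s) / (s ⬝ᵥ B *ᵥ s)) • s) ⬝ᵥ B *ᵥ (x - ((x ⬝ᵥ B *ᵥ s) / (s ⬝ᵥ B *ᵥ s)) • s) =
      x ⬝ᵥ B *ᵥ x - (s ⬝ᵥ B *ᵥ s)⁻¹ * (x ⬝ᵥ B *ᵥ s) ^ 2 := by
  simp only [mulVec_sub, mulVec_smul, sub_dotProduct, dotProduct_sub, smul_dotProduct,
    dotProduct_smul, smul_eq_mul, hB.dotProduct_mulVec_comm s x]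
  field_simp
  ring

lemma sq_dotProduct_le (u v : n → ℝ) : (u ⬝ᵥ v) ^ 2 ≤ (u ⬝ᵥ u) * (v ⬝ᵥ v) := by
  simpa only [dotProduct, sq] using Finset.sum_mul_sq_le_sq_mul_sq Finset.univ u v

lemma of_mul_mul_transpose_of_apply {m : Type*} [Fintype m] (p q : Fin 2 → m → ℝ)
    (M : Matrix m m ℝ) (k l : Fin 2) :
    (of p * M * (of q)ᵀ) k l = p k ⬝ᵥ M *ᵥ q l := by
  simp only [mul_apply, of_apply, transpose_apply, dotProduct, mulVec, Finset.mul_sum,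
    Finset.sum_mul, mul_assoc]
  exact Finset.sum_comm

noncomputable def bfgsUpdate (B : Matrix n n ℝ) (s y : n → ℝ) : Matrix n n ℝ :=
  B - (s ⬝ᵥ B *ᵥ s)⁻¹ • vecMulVec (B *ᵥ s) (B *ᵥ s) + (s ⬝ᵥ y)⁻¹ • vecMulVec y y

lemma isHermitian_bfgsUpdate {B : Matrix n n ℝ} (hB : B.IsHermitian) (s y : n → ℝ) :
    (bfgsUpdate B s y).IsHermitian := by
  have hvv : ∀ v : n → ℝ, (vecMulVec v v).IsHermitian := fun v => by
    simpa only [star_trivial] using (posSemidef_vecMulVec_self_star v).isHermitian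
  exact (hB.sub ((hvv _).smul (.all _))).add ((hvv _).smul (.all _))

lemma dotProduct_bfgsUpdate_mulVec (B : Matrix n n ℝ) (s y x : n → ℝ) :
    x ⬝ᵥ bfgsUpdate B s y *ᵥ x =
      x ⬝ᵥ B *ᵥ x - (s ⬝ᵥ B *ᵥ s)⁻¹ * (x ⬝ᵥ B *ᵥ s) ^ 2 + (s ⬝ᵥ y)⁻¹ * (x ⬝ᵥ y) ^ 2 := by
  simp only [bfgsUpdate, add_mulVec, sub_mulVec, smul_mulVec, vecMulVec_mulVec, dotProduct_add,
    dotProduct_sub, dotProduct_smul, smul_eq_mul, MulOpposite.smul_eq_mul_unop,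
    MulOpposite.unop_op]
  rw [dotProduct_comm (B *ᵥ s) x, dotProduct_comm y x]
  ring

lemma trace_bfgsUpdate (B : Matrix n n ℝ) (s y : n → ℝ) :
    trace (bfgsUpdate B s y) =
      trace B - (B *ᵥ s ⬝ᵥ B *ᵥ s) / (s ⬝ᵥ B *ᵥ s) + y ⬝ᵥ y / (s ⬝ᵥ y) := by
  simp only [bfgsUpdate, trace_add, trace_sub, trace_smul, trace_vecMulVec, smul_eq_mul,
    inv_mul_eq_div]

/-- The quadratic form of the update is that of `B` on the `B`-orthogonal complement of `s`,
plus `(x ⬝ᵥ y)² / (s ⬝ᵥ y)`; the two vanish together only at `x = 0`. -/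
lemma posDef_bfgsUpdate {B : Matrix n n ℝ} (hB : B.PosDef) {s y : n → ℝ}
    (hsy : 0 < s ⬝ᵥ y) : (bfgsUpdate B s y).PosDef := by
  have hs : s ≠ 0 := by rintro rfl; simp at hsy
  have hτ : 0 < s ⬝ᵥ B *ᵥ s := by simpa only [star_trivial] using hB.dotProduct_mulVec_pos hs
  refine .of_dotProduct_mulVec_pos (isHermitian_bfgsUpdate hB.1 s y) fun x hx => ?_
  rw [star_trivial, dotProduct_bfgsUpdate_mulVec, ← hB.1.dotProduct_mulVec_sub_smul_self hτ.ne']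
  set c := (x ⬝ᵥ B *ᵥ s) / (s ⬝ᵥ B *ᵥ s)
  rcases eq_or_ne (x - c • s) 0 with hproj | hproj
  · have hc : c ≠ 0 := by rintro hc; rw [hc, zero_smul, sub_zero] at hproj; exact hx hproj
    have hxy : x ⬝ᵥ y ≠ 0 := by
      rw [sub_eq_zero.mp hproj, smul_dotProduct, smul_eq_mul]; exact mul_ne_zero hc hsy.ne'
    rw [hproj, zero_dotProduct, zero_add]
    positivity
  · have := hB.dotProduct_mulVec_pos hproj
    rw [star_trivial] at this
    positivity

variable [DecidableEq n]

lemma det_bfgsUpdate {B : Matrix n n ℝ} (hB : B.IsHermitian) (hdet : IsUnit B.det)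
    {s y : n → ℝ} (hτ : s ⬝ᵥ B *ᵥ s ≠ 0) (hσ : s ⬝ᵥ y ≠ 0) :
    det (bfgsUpdate B s y) = det B * ((s ⬝ᵥ y) / (s ⬝ᵥ B *ᵥ s)) := by
  have hU : bfgsUpdate B s y =
      B + (of ![B *ᵥ s, y])ᵀ * of ![-(s ⬝ᵥ B *ᵥ s)⁻¹ • (B *ᵥ s), (s ⬝ᵥ y)⁻¹ • y] := by
    ext a b
    simp only [bfgsUpdate, add_apply, sub_apply, smul_apply, vecMulVec_apply, mul_apply,
      transpose_apply, of_apply, Fin.sum_univ_two, cons_val_zero, cons_val_one, cons_val_fin_one,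
      Pi.smul_apply, smul_eq_mul]
    ring
  have hBs : B⁻¹ *ᵥ (B *ᵥ s) = s := by
    rw [mulVec_mulVec, nonsing_inv_mul _ hdet, one_mulVec]
  have hBsy : B *ᵥ s ⬝ᵥ B⁻¹ *ᵥ y = s ⬝ᵥ y := by
    rw [dotProduct_comm, hB.dotProduct_mulVec_comm, mulVec_mulVec, mul_nonsing_inv _ hdet,
      one_mulVec]
  rw [hU, det_add_mul _ _ hdet, det_fin_two]
  congr 1
  simp only [add_apply, of_mul_mul_transpose_of_apply]
  simp only [one_apply_eq, one_apply_ne zero_ne_one, one_apply_ne one_ne_zero, cons_val_zero,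
    cons_val_one, cons_val_fin_one, neg_smul, neg_dotProduct, smul_dotProduct, smul_eq_mul, hBs,
    hBsy, dotProduct_comm (B *ᵥ s) s, dotProduct_comm y s]
  field_simp
  ring

lemma IsHermitian.repr_toEuclideanLin_apply {A : Matrix n n ℝ} (hA : A.IsHermitian)
    (u : EuclideanSpace ℝ n) (j : n) :
    hA.eigenvectorBasis.repr (toEuclideanLin A u) j =
      hA.eigenvalues j * hA.eigenvectorBasis.repr u j := by
  have hv : toEuclideanLin A (hA.eigenvectorBasis j) =
      hA.eigenvalues j • hA.eigenvectorBasis j := by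
    rw [toLpLin_apply, hA.mulVec_eigenvectorBasis]; rfl
  rw [OrthonormalBasis.repr_apply_apply, ← isSymmetric_toEuclideanLin_iff.mpr hA, hv,
    real_inner_smul_left, ← OrthonormalBasis.repr_apply_apply]

lemma IsHermitian.mul_norm_sq_le_inner_toEuclideanLin {A : Matrix n n ℝ} (hA : A.IsHermitian)
    {a : ℝ} (ha : ∀ j, a ≤ hA.eigenvalues j) (u : EuclideanSpace ℝ n) :
    a * ‖u‖ ^ 2 ≤ inner ℝ (toEuclideanLin A u) u := by
  rw [← hA.eigenvectorBasis.repr.norm_map u, EuclideanSpace.norm_sq_eq,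
    ← hA.eigenvectorBasis.repr.inner_map_map, PiLp.inner_apply, Finset.mul_sum]
  refine Finset.sum_le_sum fun j _ => ?_
  rw [hA.repr_toEuclideanLin_apply]
  simp only [Real.norm_eq_abs, sq_abs, RCLike.inner_apply, conj_trivial]
  nlinarith [ha j, sq_nonneg (hA.eigenvectorBasis.repr u j)]

lemma IsHermitian.norm_toEuclideanLin_le {A : Matrix n n ℝ} (hA : A.IsHermitian)
    {c : ℝ} (hc : ∀ j, |hA.eigenvalues j| ≤ c) (u : EuclideanSpace ℝ n) :
    ‖toEuclideanLin A u‖ ≤ c * ‖u‖ := by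
  rcases isEmpty_or_nonempty n with hn | ⟨⟨j₀⟩⟩
  · simp [Subsingleton.elim u 0]
  have hc0 : 0 ≤ c := (abs_nonneg _).trans (hc j₀)
  refine le_of_sq_le_sq ?_ (by positivity)
  rw [mul_pow, ← hA.eigenvectorBasis.repr.norm_map u, ← hA.eigenvectorBasis.repr.norm_map,
    EuclideanSpace.norm_sq_eq, EuclideanSpace.norm_sq_eq, Finset.mul_sum]
  refine Finset.sum_le_sum fun j _ => ?_
  rw [hA.repr_toEuclideanLin_apply]
  simp only [Real.norm_eq_abs, sq_abs, mul_pow]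
  exact mul_le_mul_of_nonneg_right (sq_le_sq' (abs_le.mp (hc j)).1 (abs_le.mp (hc j)).2) (sq_nonneg _)

lemma PosDef.eigenvalues_div_le_inner_div {A : Matrix n n ℝ} (hA : A.PosDef) {i k : n}
    (hi : ∀ j, hA.1.eigenvalues i ≤ hA.1.eigenvalues j)
    (hk : ∀ j, hA.1.eigenvalues j ≤ hA.1.eigenvalues k)
    {u : EuclideanSpace ℝ n} (hu : u ≠ 0) :
    hA.1.eigenvalues i / hA.1.eigenvalues k ≤
      inner ℝ (toEuclideanLin A u) u / (‖toEuclideanLin A u‖ * ‖u‖) := by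
  set T := toEuclideanLin A
  have hpos_i := hA.eigenvalues_pos i
  have hpos_k := hA.eigenvalues_pos k
  have hu' : 0 < ‖u‖ := norm_pos_iff.mpr hu
  have hinner := hA.1.mul_norm_sq_le_inner_toEuclideanLin hi u
  have hnorm : ‖T u‖ ≤ hA.1.eigenvalues k * ‖u‖ :=
    hA.1.norm_toEuclideanLin_le (fun j => abs_le.mpr ⟨by linarith [hi j], hk j⟩) u
  have hTu : 0 < ‖T u‖ := by
    refine norm_pos_iff.mpr fun h => ?_
    rw [h, inner_zero_left] at hinner
    linarith [mul_pos hpos_i (pow_pos hu' 2)]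
  calc hA.1.eigenvalues i / hA.1.eigenvalues k
      = hA.1.eigenvalues i * ‖u‖ ^ 2 / (hA.1.eigenvalues k * ‖u‖ * ‖u‖) := by
        field_simp
    _ ≤ inner ℝ (T u) u / (‖T u‖ * ‖u‖) := by
        gcongr
        exact le_trans (by positivity) hinner

noncomputable def traceSubLogDet (A : Matrix n n ℝ) : ℝ := trace A - Real.log (det A)

lemma traceSubLogDet_smul_one (δ : ℝ) :
    traceSubLogDet (δ • (1 : Matrix n n ℝ)) = Fintype.card n * (δ - Real.log δ) := by
  rw [traceSubLogDet, trace_smul, trace_one, det_smul, det_one, mul_one, Real.log_pow,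
    smul_eq_mul]
  ring

lemma PosDef.traceSubLogDet_eq_sum {A : Matrix n n ℝ} (hA : A.PosDef) :
    traceSubLogDet A = ∑ j, (hA.1.eigenvalues j - Real.log (hA.1.eigenvalues j)) := by
  rw [traceSubLogDet, hA.1.trace_eq_sum_eigenvalues, hA.1.det_eq_prod_eigenvalues,
    Finset.sum_sub_distrib]
  simp only [RCLike.ofReal_real_eq_id, id]
  rw [Real.log_prod fun j _ => (hA.eigenvalues_pos j).ne']

lemma PosDef.log_eigenvalues_sub_le {A : Matrix n n ℝ} (hA : A.PosDef) (i k : n) :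
    Real.log (hA.1.eigenvalues k) - Real.log (hA.1.eigenvalues i) ≤ traceSubLogDet A := by
  set f := fun j => hA.1.eigenvalues j - Real.log (hA.1.eigenvalues j)
  have hf : ∀ j, 0 ≤ f j := fun j => by
    linarith [Real.log_le_sub_one_of_pos (hA.eigenvalues_pos j)]
  rw [hA.traceSubLogDet_eq_sum]
  rcases eq_or_ne k i with rfl | hki
  · rw [sub_self]
    exact Finset.sum_nonneg fun j _ => hf j
  have hpair : f k + f i ≤ ∑ j, f j := by
    rw [← Finset.sum_pair hki]
    exact Finset.sum_le_sum_of_subset_of_nonneg (Finset.subset_univ _) fun j _ _ => hf j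
  have hfk := Real.two_mul_log_le_self (hA.eigenvalues_pos k)
  have hfi := (hA.eigenvalues_pos i).le
  simp only [f] at hpair
  linarith

lemma PosDef.exp_neg_traceSubLogDet_le_inner_div {A : Matrix n n ℝ} (hA : A.PosDef)
    {g : EuclideanSpace ℝ n} (hg : g ≠ 0) :
    Real.exp (-traceSubLogDet A) ≤
      inner ℝ g (toEuclideanLin A⁻¹ g) / (‖g‖ * ‖toEuclideanLin A⁻¹ g‖) := by
  have hAu : toEuclideanLin A (toEuclideanLin A⁻¹ g) = g := by
    rw [toLpLin_apply, toLpLin_apply, WithLp.ofLp_toLp, mulVec_mulVec,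
      mul_nonsing_inv _ hA.det_pos.ne'.isUnit, one_mulVec, WithLp.toLp_ofLp]
  set u := toEuclideanLin A⁻¹ g
  have hu : u ≠ 0 := by rintro h; rw [h, map_zero] at hAu; exact hg hAu.symm
  have hne : (Finset.univ : Finset n).Nonempty := by
    by_contra h
    rw [Finset.not_nonempty_iff_eq_empty, Finset.univ_eq_empty_iff] at h
    exact hu (Subsingleton.elim _ _)
  obtain ⟨i, -, hi⟩ := Finset.exists_min_image Finset.univ hA.1.eigenvalues hne
  obtain ⟨k, -, hk⟩ := Finset.exists_max_image Finset.univ hA.1.eigenvalues hne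
  rw [← hAu]
  calc Real.exp (-traceSubLogDet A)
      ≤ Real.exp (Real.log (hA.1.eigenvalues i) - Real.log (hA.1.eigenvalues k)) := by
        gcongr
        linarith [hA.log_eigenvalues_sub_le i k]
    _ = hA.1.eigenvalues i / hA.1.eigenvalues k := by
        rw [Real.exp_sub, Real.exp_log (hA.eigenvalues_pos i), Real.exp_log (hA.eigenvalues_pos k)]
    _ ≤ _ := hA.eigenvalues_div_le_inner_div (fun j => hi j (Finset.mem_univ j))
        (fun j => hk j (Finset.mem_univ j)) hu

lemma PosDef.traceSubLogDet_bfgsUpdate_le {B : Matrix n n ℝ} (hB : B.PosDef) {s y : n → ℝ}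
    (hsy : 0 < s ⬝ᵥ y) :
    traceSubLogDet (bfgsUpdate B s y) ≤
      traceSubLogDet B + y ⬝ᵥ y / (s ⬝ᵥ y) - Real.log (s ⬝ᵥ y / (s ⬝ᵥ s)) - 1 := by
  have hs : s ≠ 0 := by rintro rfl; simp at hsy
  have hss : 0 < s ⬝ᵥ s := by simpa using dotProduct_star_self_pos_iff.mpr hs
  have hτ : 0 < s ⬝ᵥ B *ᵥ s := by simpa only [star_trivial] using hB.dotProduct_mulVec_pos hs
  have hratio : (s ⬝ᵥ B *ᵥ s) / (s ⬝ᵥ s) ≤ (B *ᵥ s ⬝ᵥ B *ᵥ s) / (s ⬝ᵥ B *ᵥ s) := by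
    rw [div_le_div_iff₀ hss hτ]
    nlinarith [sq_dotProduct_le s (B *ᵥ s)]
  have hlog := (Real.log_le_sub_one_of_pos (div_pos hτ hss)).trans (sub_le_sub_right hratio 1)
  rw [traceSubLogDet, traceSubLogDet, trace_bfgsUpdate,
    det_bfgsUpdate hB.1 hB.det_pos.ne'.isUnit hτ.ne' hsy.ne', Real.log_mul hB.det_pos.ne'
      (div_pos hsy hτ).ne', Real.log_div hsy.ne' hτ.ne', Real.log_div hsy.ne' hss.ne']
  rw [Real.log_div hτ.ne' hss.ne'] at hlog
  linarith

lemma posDef_and_traceSubLogDet_le_of_bfgsUpdate {B : ℕ → Matrix n n ℝ} {s y : ℕ → n → ℝ}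
    {t : ℕ} {K : ℝ} (hB0 : (B 0).PosDef) (hsy : ∀ i < t, 0 < s i ⬝ᵥ y i)
    (hupd : ∀ i < t, B (i + 1) = bfgsUpdate (B i) (s i) (y i))
    (hK : ∀ i < t, y i ⬝ᵥ y i / (s i ⬝ᵥ y i) - Real.log (s i ⬝ᵥ y i / (s i ⬝ᵥ s i)) - 1 ≤ K) :
    ∀ i ≤ t, (B i).PosDef ∧ traceSubLogDet (B i) ≤ traceSubLogDet (B 0) + i * K := by
  intro i
  induction i with
  | zero => intro; simpa using hB0
  | succ i ih =>
    intro hi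
    obtain ⟨hBi, hψ⟩ := ih (by omega)
    rw [hupd i hi]
    refine ⟨posDef_bfgsUpdate hBi (hsy i hi), ?_⟩
    have := hBi.traceSubLogDet_bfgsUpdate_le (hsy i hi)
    push_cast
    linarith [hK i hi]

end Matrix

theorem lbfgs_good_iterates_general
    {d : ℕ} (t : ℕ)
    (mhat Mhat δ : ℝ) (hm : 0 < mhat)
    (hδl : mhat ≤ δ) (hδu : δ ≤ Mhat)
    (B : ℕ → Matrix (Fin d) (Fin d) ℝ)
    (hB0 : B 0 = δ • (1 : Matrix (Fin d) (Fin d) ℝ))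
    (s y : ℕ → Fin d → ℝ)
    (hsy : ∀ i < t, 0 < s i ⬝ᵥ y i)
    (hlow : ∀ i < t, s i ⬝ᵥ y i / (s i ⬝ᵥ s i) ≥ mhat)
    (hup : ∀ i < t, y i ⬝ᵥ y i / (s i ⬝ᵥ y i) ≤ Mhat)
    (hupd : ∀ i < t, B (i + 1) =
      B i - (s i ⬝ᵥ (B i).mulVec (s i))⁻¹ •
          vecMulVec ((B i).mulVec (s i)) ((B i).mulVec (s i)) +
        (s i ⬝ᵥ y i)⁻¹ • vecMulVec (y i) (y i))
    (H : EuclideanSpace ℝ (Fin d) →ₗ[ℝ] EuclideanSpace ℝ (Fin d))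
    (hH : H = Matrix.toEuclideanLin (B t)⁻¹) :
    ∀ g : EuclideanSpace ℝ (Fin d), g ≠ 0 →
      (inner ℝ g (H g) : ℝ) / (‖g‖ * ‖H g‖) ≥
        Real.exp (-((d : ℝ) + t) * (Mhat - Real.log mhat)) := by
  intro g hg
  have hδ : 0 < δ := hm.trans_le hδl
  have hstep : ∀ i < t, y i ⬝ᵥ y i / (s i ⬝ᵥ y i) - Real.log (s i ⬝ᵥ y i / (s i ⬝ᵥ s i)) - 1
      ≤ Mhat - Real.log mhat := fun i hi => by
    linarith [hup i hi, Real.log_le_log hm (hlow i hi)]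
  have hB0pd : (B 0).PosDef := hB0 ▸ PosDef.one.smul hδ
  obtain ⟨hA, hψ⟩ := posDef_and_traceSubLogDet_le_of_bfgsUpdate hB0pd hsy hupd hstep t le_rfl
  have hψ0 : traceSubLogDet (B 0) ≤ d * (Mhat - Real.log mhat) := by
    rw [hB0, traceSubLogDet_smul_one, Fintype.card_fin]
    gcongr
  rw [hH, ge_iff_le]
  refine le_trans ?_ (hA.exp_neg_traceSubLogDet_le_inner_div hg)
  gcongr
  linarith

/-- Lemma 3.2, L-BFGS case: with `H = B_t⁻¹` the L-BFGS inverse Hessian approximation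
built from `t` BFGS updates of `B₀ = δ I` with curvature pairs obeying the bounds
`m̂`, `M̂`, the cosine of the angle between `H g` and `g` is at least
`exp(−(d + t)(M̂ − log m̂))` for every nonzero `g`. -/
theorem lbfgs_good_iterates
    {d : ℕ} (hd : 0 < d) (t : ℕ)
    (mhat Mhat δ : ℝ) (hm : 0 < mhat) (hmM : mhat ≤ Mhat)
    (hδl : mhat ≤ δ) (hδu : δ ≤ Mhat)
    (B : ℕ → Matrix (Fin d) (Fin d) ℝ)
    (hB0 : B 0 = δ • (1 : Matrix (Fin d) (Fin d) ℝ))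
    (s y : ℕ → Fin d → ℝ)
    (hs : ∀ i < t, s i ≠ 0)
    (hsy : ∀ i < t, 0 < s i ⬝ᵥ y i)
    (hlow : ∀ i < t, s i ⬝ᵥ y i / (s i ⬝ᵥ s i) ≥ mhat)
    (hup : ∀ i < t, y i ⬝ᵥ y i / (s i ⬝ᵥ y i) ≤ Mhat)
    (hupd : ∀ i < t, B (i + 1) =
      B i - (s i ⬝ᵥ (B i).mulVec (s i))⁻¹ •
          vecMulVec ((B i).mulVec (s i)) ((B i).mulVec (s i)) +
        (s i ⬝ᵥ y i)⁻¹ • vecMulVec (y i) (y i))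
    (H : EuclideanSpace ℝ (Fin d) →ₗ[ℝ] EuclideanSpace ℝ (Fin d))
    (hH : H = Matrix.toEuclideanLin (B t)⁻¹) :
    ∀ g : EuclideanSpace ℝ (Fin d), g ≠ 0 →
      (inner ℝ g (H g) : ℝ) / (‖g‖ * ‖H g‖) ≥
        Real.exp (-((d : ℝ) + t) * (Mhat - Real.log mhat)) :=
  lbfgs_good_iterates_general t mhat Mhat δ hm hδl hδu B hB0 s y hsy hlow hup hupd H hH
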